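/- arXiv:1105.1304 — 5 statements merged into one kernel-verified Lean document; each statement's English description precedes it below -/
import Mathlib

section
/- The extreme value distribution function F(s) = 1 − exp(−e^s) satisfies, for all v ∈ ℝ, f(v)² − ḟ(v)·F(v) > 0 and f(v)² + ḟ(v)·(1 − F(v)) > 0, where f = F' and ḟ = F''. -/
open Real

/-!
With `e = exp v` and `G = exp (-e) = 1 - F v` we have `F' = e G` and `F'' = (1 - e) e G`, so the two
quantities simplify to `e G (e + G - 1)` and `e G ^ 2`. The first is positive because
`exp (-e) > 1 - e`, the second trivially.
-/

theorem hasDerivAt_exp_neg_exp (x : ℝ) :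
    HasDerivAt (fun s => exp (-exp s)) (-(exp x * exp (-exp x))) x := by
  convert ((hasDerivAt_exp x).fun_neg).exp using 1
  ring

theorem deriv_one_sub_exp_neg_exp :
    deriv (fun s => 1 - exp (-exp s)) = fun s => exp s * exp (-exp s) := by
  funext x
  simpa using ((hasDerivAt_exp_neg_exp x).const_sub 1).deriv

theorem deriv_exp_mul_exp_neg_exp (x : ℝ) :
    deriv (fun s => exp s * exp (-exp s)) x = (1 - exp x) * (exp x * exp (-exp x)) := by
  refine ((hasDerivAt_exp x).mul (hasDerivAt_exp_neg_exp x)).deriv.trans ?_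
  ring

theorem extreme_value_satisfies_M4b :
    let F : ℝ → ℝ := fun s => 1 - Real.exp (-(Real.exp s))
    ∀ v : ℝ, (deriv F v) ^ 2 - (deriv (deriv F) v) * F v > 0 ∧
      (deriv F v) ^ 2 + (deriv (deriv F) v) * (1 - F v) > 0 := by
  intro F v
  have hF' : deriv F = fun s => exp s * exp (-exp s) := deriv_one_sub_exp_neg_exp
  have hF'' : deriv (deriv F) v = (1 - exp v) * (exp v * exp (-exp v)) := by
    rw [hF']
    exact deriv_exp_mul_exp_neg_exp v
  have hgap : 0 < exp v + exp (-exp v) - 1 := by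
    linarith [one_sub_lt_exp_neg (exp_pos v).ne']
  rw [hF'']
  simp only [hF', F]
  constructor
  · convert_to 0 < exp v * exp (-exp v) * (exp v + exp (-exp v) - 1) using 1
    · ring
    · positivity
  · convert_to 0 < exp v * exp (-exp v) ^ 2 using 1
    · ring
    · positivity
end

section
/- For every γ > 0, the Pareto-type distribution function F(s) = 1 − (1 + γe^s)^{−1/γ} satisfies, for all v ∈ ℝ, f(v)² + ḟ(v)·(1 − F(v)) > 0, where f = F' and ḟ = F''. -/
/-! With `S = 1 - F = u ^ (-1/γ)` for `u = 1 + γ eˢ`, one has `f = eˢ u ^ (-1/γ - 1)` and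
`ḟ = eˢ u ^ (-1/γ - 2) (1 - eˢ)`, so `f² + ḟ S = eˢ u ^ (-2/γ - 2) (eˢ + 1 - eˢ) = eˢ u ^ (-2/γ - 2) > 0`.
Equivalently, `log S = -(1/γ) log u` is strictly concave. -/

open Real

noncomputable section

def paretoCDF (γ s : ℝ) : ℝ := 1 - (1 + γ * exp s) ^ (-(1 / γ))

section

variable {γ : ℝ}

lemma one_add_mul_exp_pos (hγ : 0 ≤ γ) (s : ℝ) : 0 < 1 + γ * exp s := by positivity

lemma hasDerivAt_one_add_mul_exp_rpow (hγ : 0 ≤ γ) (p s : ℝ) :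
    HasDerivAt (fun s => (1 + γ * exp s) ^ p)
      (p * γ * exp s * (1 + γ * exp s) ^ (p - 1)) s := by
  have hu : HasDerivAt (fun s => 1 + γ * exp s) (γ * exp s) s := by
    simpa using ((hasDerivAt_exp s).const_mul γ).const_add 1
  convert hu.rpow_const (p := p) (Or.inl (one_add_mul_exp_pos hγ s).ne') using 1
  ring

lemma hasDerivAt_exp_mul_one_add_mul_exp_rpow (hγ : 0 ≤ γ) (q s : ℝ) :
    HasDerivAt (fun s => exp s * (1 + γ * exp s) ^ q)
      (exp s * (1 + γ * exp s) ^ (q - 1) * (1 + (q + 1) * γ * exp s)) s := by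
  refine ((hasDerivAt_exp s).mul (hasDerivAt_one_add_mul_exp_rpow hγ q s)).congr_deriv ?_
  have hsplit : (1 + γ * exp s) ^ q = (1 + γ * exp s) ^ (q - 1) * (1 + γ * exp s) := by
    rw [← rpow_add_one (one_add_mul_exp_pos hγ s).ne', sub_add_cancel]
  rw [hsplit]
  ring

lemma one_sub_paretoCDF (γ s : ℝ) : 1 - paretoCDF γ s = (1 + γ * exp s) ^ (-(1 / γ)) := by
  simp [paretoCDF]

lemma deriv_paretoCDF (hγ : 0 < γ) :
    deriv (paretoCDF γ) = fun s => exp s * (1 + γ * exp s) ^ (-(1 / γ) - 1) := by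
  funext s
  refine (((hasDerivAt_const s 1).sub
    (hasDerivAt_one_add_mul_exp_rpow hγ.le (-(1 / γ)) s)).congr_deriv ?_).deriv
  field_simp
  ring

lemma deriv_deriv_paretoCDF (hγ : 0 < γ) (s : ℝ) :
    deriv (deriv (paretoCDF γ)) s =
      exp s * (1 + γ * exp s) ^ (-(1 / γ) - 2) * (1 - exp s) := by
  rw [deriv_paretoCDF hγ]
  refine ((hasDerivAt_exp_mul_one_add_mul_exp_rpow hγ.le (-(1 / γ) - 1) s).congr_deriv ?_).deriv
  have hexp : -(1 / γ) - 1 - 1 = -(1 / γ) - 2 := by ring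
  rw [hexp]
  field_simp
  ring

end

theorem pareto_satisfies_M4b_part (γ : ℝ) (hγ : 0 < γ) :
    let F : ℝ → ℝ := fun s => 1 - (1 + γ * Real.exp s) ^ (-(1 / γ))
    ∀ v : ℝ, (deriv F v) ^ 2 + (deriv (deriv F) v) * (1 - F v) > 0 := by
  intro F v
  change deriv (paretoCDF γ) v ^ 2 + deriv (deriv (paretoCDF γ)) v * (1 - paretoCDF γ v) > 0
  rw [deriv_deriv_paretoCDF hγ, deriv_paretoCDF hγ, one_sub_paretoCDF]
  set u := 1 + γ * exp v
  have hu : 0 < u := one_add_mul_exp_pos hγ.le v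
  have hsq : (u ^ (-(1 / γ) - 1)) ^ 2 = u ^ (-(1 / γ) - 2) * u ^ (-(1 / γ)) := by
    rw [← rpow_natCast, ← rpow_mul hu.le, ← rpow_add hu]
    ring_nf
  calc (exp v * u ^ (-(1 / γ) - 1)) ^ 2
        + exp v * u ^ (-(1 / γ) - 2) * (1 - exp v) * u ^ (-(1 / γ))
      = exp v * (u ^ (-(1 / γ) - 2) * u ^ (-(1 / γ))) := by rw [mul_pow, hsq]; ring
    _ > 0 := by positivity
end
end

section
/- Let q(δ, t) = δ log F(t) + (1 − δ) log(1 − F(t)) where F : ℝ → (0,1) is twice continuously differentiable, and suppose on a compact interval I there are constants 0 < c₁ ≤ −∂²q(δ,t)/∂t² ≤ c₂ < ∞ for δ ∈ {0,1} and t ∈ I. Let X be a random element, θ, θ₀ measurable functions into I, and Δ a {0,1}-valued random variable with E[Δ | X] = F(θ₀(X)). Then (c₁/2)·E[(θ(X) − θ₀(X))²] ≤ E[q(Δ, θ₀(X)) − q(Δ, θ(X))] ≤ (c₂/2)·E[(θ(X) − θ₀(X))²]. -/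
/-! For fixed `s`, `t ↦ -bernoulliLogLik F (F s) t` is the expected loss at `t` when the label
has mean `F s`. Its derivative vanishes at `t = s` (the score has mean zero), and its second
derivative is a convex combination of `-q''(0, ·)` and `-q''(1, ·)`, hence lies in `[c₁, c₂]`.
For such an `f` with `f'(s) = 0`, `f - c₁/2 (· - s)²` and `c₂/2 (· - s)² - f` are convex with a
critical point at `s`, which pinches `f t - f s` between `c₁/2 (t - s)²` and `c₂/2 (t - s)²`.
Because the loss is affine in the label and `θ(X)`, `θ₀(X)` are `σ(X)`-measurable, replacing `Δ`
by `E[Δ | X] = F(θ₀(X))` leaves the expected loss unchanged; integrating the pointwise bounds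
finishes the proof. -/

open MeasureTheory Set

theorem ConvexOn.le_of_hasDerivAt_eq_zero {S : Set ℝ} {f : ℝ → ℝ} {x y : ℝ}
    (hf : ConvexOn ℝ S f) (hx : x ∈ S) (hy : y ∈ S) (hfx : HasDerivAt f 0 x) : f x ≤ f y := by
  rcases lt_trichotomy x y with hxy | rfl | hyx
  · have h := hf.le_slope_of_hasDerivAt hx hy hxy hfx
    rw [slope_def_field, le_div_iff₀ (sub_pos.2 hxy)] at h
    linarith
  · exact le_rfl
  · have h := hf.slope_le_of_hasDerivAt hy hx hyx hfx
    rw [slope_def_field, div_le_iff₀ (sub_pos.2 hyx)] at h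
    linarith

theorem sq_mul_le_sub_of_deriv_eq_zero {S : Set ℝ} (hS : Convex ℝ S) {f : ℝ → ℝ}
    (hf : ContDiff ℝ 2 f) {c s t : ℝ} (hc : ∀ x ∈ S, c ≤ iteratedDeriv 2 f x)
    (hs : s ∈ S) (ht : t ∈ S) (hs0 : deriv f s = 0) :
    c / 2 * (t - s) ^ 2 ≤ f t - f s := by
  have hf' (x : ℝ) : HasDerivAt f (deriv f x) x :=
    (hf.differentiable two_ne_zero x).hasDerivAt
  have hf'' (x : ℝ) : HasDerivAt (deriv f) (iteratedDeriv 2 f x) x := by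
    have hd := hf.differentiable_iteratedDeriv 1 (by norm_num)
    rw [iteratedDeriv_one] at hd
    rw [iteratedDeriv_succ, iteratedDeriv_one]
    exact (hd x).hasDerivAt
  have hg (x : ℝ) :
      HasDerivAt (fun x => f x - c / 2 * (x - s) ^ 2) (deriv f x - c * (x - s)) x :=
    ((hf' x).sub ((((hasDerivAt_id' x).sub_const s).pow 2).const_mul (c / 2))).congr_deriv
      (by ring)
  have hg' (x : ℝ) :
      HasDerivAt (fun x => deriv f x - c * (x - s)) (iteratedDeriv 2 f x - c) x :=
    ((hf'' x).sub (((hasDerivAt_id' x).sub_const s).const_mul c)).congr_deriv (by rw [mul_one])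
  have hconv : ConvexOn ℝ S fun x => f x - c / 2 * (x - s) ^ 2 :=
    convexOn_of_hasDerivWithinAt2_nonneg hS (fun x _ => (hg x).continuousAt.continuousWithinAt)
      (fun x _ => (hg x).hasDerivWithinAt) (fun x _ => (hg' x).hasDerivWithinAt)
      (fun x hx => sub_nonneg.2 (hc x (interior_subset hx)))
  have hmin : f s - c / 2 * (s - s) ^ 2 ≤ f t - c / 2 * (t - s) ^ 2 :=
    hconv.le_of_hasDerivAt_eq_zero hs ht (by simpa [hs0] using hg s)
  rw [sub_self, zero_pow two_ne_zero, mul_zero, sub_zero] at hmin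
  linarith

theorem sub_le_sq_mul_of_deriv_eq_zero {S : Set ℝ} (hS : Convex ℝ S) {f : ℝ → ℝ}
    (hf : ContDiff ℝ 2 f) {C s t : ℝ} (hC : ∀ x ∈ S, iteratedDeriv 2 f x ≤ C)
    (hs : s ∈ S) (ht : t ∈ S) (hs0 : deriv f s = 0) :
    f t - f s ≤ C / 2 * (t - s) ^ 2 := by
  have h := sq_mul_le_sub_of_deriv_eq_zero hS hf.neg (c := -C)
    (fun x hx => by rw [iteratedDeriv_fun_neg]; linarith [hC x hx]) hs ht
    (by rw [deriv.fun_neg, hs0, neg_zero])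
  linarith

noncomputable def bernoulliLogLik (F : ℝ → ℝ) (δ t : ℝ) : ℝ :=
  δ * Real.log (F t) + (1 - δ) * Real.log (1 - F t)

section BernoulliLogLik

variable {F : ℝ → ℝ}

theorem contDiff_bernoulliLogLik (hF : ContDiff ℝ 2 F) (hF01 : ∀ t, 0 < F t ∧ F t < 1)
    (p : ℝ) : ContDiff ℝ 2 (bernoulliLogLik F p) :=
  (contDiff_const.mul (hF.log fun t => (hF01 t).1.ne')).add
    (contDiff_const.mul ((contDiff_const.sub hF).log fun t => (sub_pos.2 (hF01 t).2).ne'))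

theorem deriv_bernoulliLogLik_self {s : ℝ} (hF : DifferentiableAt ℝ F s) (hF0 : F s ≠ 0)
    (hF1 : F s ≠ 1) : deriv (bernoulliLogLik F (F s)) s = 0 := by
  have hF1' : 1 - F s ≠ 0 := sub_ne_zero.2 hF1.symm
  have hderiv := ((hF.hasDerivAt.log hF0).const_mul (F s)).fun_add
    (((hF.hasDerivAt.const_sub 1).log hF1').const_mul (1 - F s))
  unfold bernoulliLogLik
  rw [hderiv.deriv]
  field_simp
  ring

theorem iteratedDeriv_two_bernoulliLogLik (hF : ContDiff ℝ 2 F)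
    (hF01 : ∀ t, 0 < F t ∧ F t < 1) (p t : ℝ) :
    iteratedDeriv 2 (bernoulliLogLik F p) t =
      p * iteratedDeriv 2 (bernoulliLogLik F 1) t +
        (1 - p) * iteratedDeriv 2 (bernoulliLogLik F 0) t := by
  have hsplit : bernoulliLogLik F p =
      (fun t => p * bernoulliLogLik F 1 t) + fun t => (1 - p) * bernoulliLogLik F 0 t :=
    funext fun t => by simp only [bernoulliLogLik, Pi.add_apply]; ring
  have h1 := (contDiff_bernoulliLogLik hF hF01 1).contDiffAt (x := t)
  have h0 := (contDiff_bernoulliLogLik hF hF01 0).contDiffAt (x := t)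
  rw [hsplit, iteratedDeriv_add (contDiffAt_const.mul h1) (contDiffAt_const.mul h0),
    iteratedDeriv_const_mul _ h1, iteratedDeriv_const_mul _ h0]

theorem bernoulliLogLik_self_sub_mem_Icc {S : Set ℝ} (hS : Convex ℝ S) (hF : ContDiff ℝ 2 F)
    (hF01 : ∀ t, 0 < F t ∧ F t < 1) {c₁ c₂ : ℝ}
    (hcurv : ∀ δ : ℝ, δ = 0 ∨ δ = 1 → ∀ t ∈ S,
      c₁ ≤ -(iteratedDeriv 2 (bernoulliLogLik F δ) t) ∧
        -(iteratedDeriv 2 (bernoulliLogLik F δ) t) ≤ c₂)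
    {s t : ℝ} (hs : s ∈ S) (ht : t ∈ S) :
    bernoulliLogLik F (F s) s - bernoulliLogLik F (F s) t ∈
      Icc (c₁ / 2 * (t - s) ^ 2) (c₂ / 2 * (t - s) ^ 2) := by
  have hcurvF (x : ℝ) (hx : x ∈ S) : c₁ ≤ -iteratedDeriv 2 (bernoulliLogLik F (F s)) x ∧
      -iteratedDeriv 2 (bernoulliLogLik F (F s)) x ≤ c₂ := by
    rw [iteratedDeriv_two_bernoulliLogLik hF hF01]
    obtain ⟨h1l, h1u⟩ := hcurv 1 (Or.inr rfl) x hx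
    obtain ⟨h0l, h0u⟩ := hcurv 0 (Or.inl rfl) x hx
    obtain ⟨hp0, hp1⟩ := hF01 s
    constructor <;> nlinarith
  have hC := contDiff_bernoulliLogLik hF hF01 (F s)
  have hs0 := deriv_bernoulliLogLik_self (hF.differentiable two_ne_zero s) (hF01 s).1.ne'
    (hF01 s).2.ne
  constructor
  · linarith [sub_le_sq_mul_of_deriv_eq_zero hS hC (C := -c₁)
      (fun x hx => by linarith [(hcurvF x hx).1]) hs ht hs0]
  · linarith [sq_mul_le_sub_of_deriv_eq_zero hS hC (c := -c₂)
      (fun x hx => by linarith [(hcurvF x hx).2]) hs ht hs0]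

end BernoulliLogLik

section CondExp

variable {Ω : Type*} {m0 : MeasurableSpace Ω} {μ : Measure Ω} [IsFiniteMeasure μ]

theorem integral_mul_eq_integral_mul_of_condExp_ae_eq {m : MeasurableSpace Ω} (hm : m ≤ m0)
    {W Y R : Ω → ℝ} (hW : StronglyMeasurable[m] W) {C : ℝ} (hWC : ∀ᵐ ω ∂μ, ‖W ω‖ ≤ C)
    (hY : Integrable Y μ) (hYR : μ[Y | m] =ᵐ[μ] R) :
    ∫ ω, W ω * Y ω ∂μ = ∫ ω, W ω * R ω ∂μ :=
  calc ∫ ω, W ω * Y ω ∂μ = ∫ ω, (μ[W * Y | m]) ω ∂μ := (integral_condExp hm).symm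
    _ = ∫ ω, W ω * R ω ∂μ := integral_congr_ae <|
      (condExp_stronglyMeasurable_mul_of_bound hm hW hY C hWC).trans
        (Filter.EventuallyEq.rfl.mul hYR)

theorem integral_comp_eq_of_condExp_comap_ae_eq {β : Type*} {mβ : MeasurableSpace β}
    {X : Ω → β} (hX : Measurable X) {L : ℝ → β → ℝ}
    (hL : ∀ δ x, L δ x = L 0 x + δ * (L 1 x - L 0 x)) (hL0 : Measurable (L 0))
    (hL1 : Measurable (L 1)) (hL0b : ∃ C, ∀ x, ‖L 0 x‖ ≤ C) (hL1b : ∃ C, ∀ x, ‖L 1 x‖ ≤ C)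
    {Y R : Ω → ℝ} (hY : Integrable Y μ) (hYR : μ[Y | mβ.comap X] =ᵐ[μ] R) :
    ∫ ω, L (Y ω) (X ω) ∂μ = ∫ ω, L (R ω) (X ω) ∂μ := by
  obtain ⟨C₀, hC₀⟩ := hL0b
  obtain ⟨C₁, hC₁⟩ := hL1b
  have hW : StronglyMeasurable[mβ.comap X] fun ω => L 1 (X ω) - L 0 (X ω) :=
    ((hL1.sub hL0).comp (comap_measurable X)).stronglyMeasurable
  have hWC : ∀ᵐ ω ∂μ, ‖L 1 (X ω) - L 0 (X ω)‖ ≤ C₁ + C₀ :=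
    ae_of_all _ fun ω => (norm_sub_le _ _).trans (add_le_add (hC₁ _) (hC₀ _))
  have hL0X : Integrable (fun ω => L 0 (X ω)) μ :=
    .of_bound (hL0.comp hX).aestronglyMeasurable C₀ (ae_of_all _ fun ω => hC₀ _)
  have hsplit (Z : Ω → ℝ) (hZ : Integrable Z μ) : ∫ ω, L (Z ω) (X ω) ∂μ =
      ∫ ω, L 0 (X ω) ∂μ + ∫ ω, (L 1 (X ω) - L 0 (X ω)) * Z ω ∂μ := by
    have hLZ (ω : Ω) : L (Z ω) (X ω) = L 0 (X ω) + (L 1 (X ω) - L 0 (X ω)) * Z ω := by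
      rw [hL]; ring
    simp only [hLZ]
    exact integral_add hL0X (hZ.bdd_mul (hW.mono hX.comap_le).aestronglyMeasurable hWC)
  rw [hsplit Y hY, hsplit R (integrable_condExp.congr hYR),
    integral_mul_eq_integral_mul_of_condExp_ae_eq hX.comap_le hW hWC hY hYR]

theorem integrable_sq_sub_of_mem_Icc {f g : Ω → ℝ} (hf : AEStronglyMeasurable f μ)
    (hg : AEStronglyMeasurable g μ) {a b : ℝ} (hfab : ∀ ω, f ω ∈ Icc a b)
    (hgab : ∀ ω, g ω ∈ Icc a b) : Integrable (fun ω => (f ω - g ω) ^ 2) μ := by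
  refine .of_bound (by fun_prop) ((b - a) ^ 2) (ae_of_all _ fun ω => ?_)
  obtain ⟨hfa, hfb⟩ := hfab ω
  obtain ⟨hga, hgb⟩ := hgab ω
  rw [Real.norm_eq_abs, abs_of_nonneg (sq_nonneg _)]
  exact sq_le_sq' (by linarith) (by linarith)

end CondExp

theorem IsCompact.exists_bound_sub_comp {α : Type*} {K : Set ℝ} (hK : IsCompact K) {g : ℝ → ℝ}
    (hg : Continuous g) {u v : α → ℝ} (hu : ∀ x, u x ∈ K) (hv : ∀ x, v x ∈ K) :
    ∃ C, ∀ x, ‖g (u x) - g (v x)‖ ≤ C := by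
  obtain ⟨C, hC⟩ := hK.exists_bound_of_continuousOn hg.continuousOn
  exact ⟨C + C, fun x => (norm_sub_le _ _).trans (add_le_add (hC _ (hu x)) (hC _ (hv x)))⟩

theorem quadratic_curvature_bound_general
    {Ω : Type*} [m0 : MeasurableSpace Ω] (μ : Measure Ω) [IsProbabilityMeasure μ]
    (F : ℝ → ℝ) (hF : ContDiff ℝ 2 F) (hF01 : ∀ t, 0 < F t ∧ F t < 1)
    (q : ℝ → ℝ → ℝ)
    (hq : ∀ δ t, q δ t = δ * Real.log (F t) + (1 - δ) * Real.log (1 - F t))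
    (a b : ℝ) (c₁ c₂ : ℝ)
    (hcurv : ∀ δ : ℝ, δ = 0 ∨ δ = 1 → ∀ t ∈ Icc a b,
      c₁ ≤ -(iteratedDeriv 2 (q δ) t) ∧ -(iteratedDeriv 2 (q δ) t) ≤ c₂)
    (X : Ω → ℝ) (hX : Measurable X)
    (θ θ₀ : ℝ → ℝ) (hθ : Measurable θ) (hθ₀ : Measurable θ₀)
    (hθrange : ∀ x, θ x ∈ Icc a b) (hθ₀range : ∀ x, θ₀ x ∈ Icc a b)
    (Δ : Ω → ℝ) (hΔ : Measurable Δ) (hΔ01 : ∀ ω, Δ ω = 0 ∨ Δ ω = 1)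
    (hcond : μ[Δ | MeasurableSpace.comap X (borel ℝ)] =ᵐ[μ] fun ω => F (θ₀ (X ω))) :
    c₁ / 2 * (∫ ω, (θ (X ω) - θ₀ (X ω)) ^ 2 ∂μ) ≤
      (∫ ω, (q (Δ ω) (θ₀ (X ω)) - q (Δ ω) (θ (X ω))) ∂μ) ∧
    (∫ ω, (q (Δ ω) (θ₀ (X ω)) - q (Δ ω) (θ (X ω))) ∂μ) ≤
      c₂ / 2 * (∫ ω, (θ (X ω) - θ₀ (X ω)) ^ 2 ∂μ) := by
  obtain rfl : q = bernoulliLogLik F := funext fun δ => funext (hq δ)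
  have hqC := contDiff_bernoulliLogLik hF hF01
  have hmeas (δ : ℝ) :
      Measurable fun x => bernoulliLogLik F δ (θ₀ x) - bernoulliLogLik F δ (θ x) :=
    ((hqC δ).continuous.measurable.comp hθ₀).sub ((hqC δ).continuous.measurable.comp hθ)
  have hbdd (δ : ℝ) := isCompact_Icc.exists_bound_sub_comp (hqC δ).continuous hθ₀range hθrange
  have hΔint : Integrable Δ μ := .of_bound hΔ.aestronglyMeasurable 1
    (ae_of_all _ fun ω => by rcases hΔ01 ω with h | h <;> simp [h])
  have hrisk := integral_comp_eq_of_condExp_comap_ae_eq hX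
    (L := fun δ x => bernoulliLogLik F δ (θ₀ x) - bernoulliLogLik F δ (θ x))
    (fun δ x => by simp only [bernoulliLogLik]; ring) (hmeas 0) (hmeas 1) (hbdd 0) (hbdd 1)
    hΔint hcond
  have hexcess (ω : Ω) := bernoulliLogLik_self_sub_mem_Icc (convex_Icc a b) hF hF01 hcurv
    (hθ₀range (X ω)) (hθrange (X ω))
  have hsq : Integrable (fun ω => (θ (X ω) - θ₀ (X ω)) ^ 2) μ :=
    integrable_sq_sub_of_mem_Icc (hθ.comp hX).aestronglyMeasurable
      (hθ₀.comp hX).aestronglyMeasurable (fun ω => hθrange (X ω)) (fun ω => hθ₀range (X ω))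
  have hrisk_int : Integrable (fun ω => bernoulliLogLik F (F (θ₀ (X ω))) (θ₀ (X ω)) -
      bernoulliLogLik F (F (θ₀ (X ω))) (θ (X ω))) μ :=
    integrable_of_le_of_le (Measurable.aestronglyMeasurable <| by
        have := hF.continuous.measurable; simp only [bernoulliLogLik]; fun_prop)
      (ae_of_all _ fun ω => (hexcess ω).1) (ae_of_all _ fun ω => (hexcess ω).2)
      (hsq.const_mul _) (hsq.const_mul _)
  rw [hrisk, ← integral_const_mul, ← integral_const_mul]
  exact ⟨integral_mono (hsq.const_mul _) hrisk_int fun ω => (hexcess ω).1,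
    integral_mono hrisk_int (hsq.const_mul _) fun ω => (hexcess ω).2⟩

theorem quadratic_curvature_bound
    {Ω : Type*} [m0 : MeasurableSpace Ω] (μ : Measure Ω) [IsProbabilityMeasure μ]
    (F : ℝ → ℝ) (hF : ContDiff ℝ 2 F) (hF01 : ∀ t, 0 < F t ∧ F t < 1)
    (q : ℝ → ℝ → ℝ)
    (hq : ∀ δ t, q δ t = δ * Real.log (F t) + (1 - δ) * Real.log (1 - F t))
    (a b : ℝ) (hab : a ≤ b) (c₁ c₂ : ℝ) (hc₁ : 0 < c₁) (hc₂ : c₁ ≤ c₂)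
    (hcurv : ∀ δ : ℝ, δ = 0 ∨ δ = 1 → ∀ t ∈ Icc a b,
      c₁ ≤ -(iteratedDeriv 2 (q δ) t) ∧ -(iteratedDeriv 2 (q δ) t) ≤ c₂)
    (X : Ω → ℝ) (hX : Measurable X)
    (θ θ₀ : ℝ → ℝ) (hθ : Measurable θ) (hθ₀ : Measurable θ₀)
    (hθrange : ∀ x, θ x ∈ Icc a b) (hθ₀range : ∀ x, θ₀ x ∈ Icc a b)
    (Δ : Ω → ℝ) (hΔ : Measurable Δ) (hΔ01 : ∀ ω, Δ ω = 0 ∨ Δ ω = 1)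
    (hcond : μ[Δ | MeasurableSpace.comap X (borel ℝ)] =ᵐ[μ] fun ω => F (θ₀ (X ω))) :
    c₁ / 2 * (∫ ω, (θ (X ω) - θ₀ (X ω)) ^ 2 ∂μ) ≤
      (∫ ω, (q (Δ ω) (θ₀ (X ω)) - q (Δ ω) (θ (X ω))) ∂μ) ∧
    (∫ ω, (q (Δ ω) (θ₀ (X ω)) - q (Δ ω) (θ (X ω))) ∂μ) ≤
      c₂ / 2 * (∫ ω, (θ (X ω) - θ₀ (X ω)) ^ 2 ∂μ) :=
  quadratic_curvature_bound_general (m0 := m0) μ F hF hF01 q hq a b c₁ c₂ hcurv X hX θ θ₀ hθ hθ₀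
    hθrange hθ₀range Δ hΔ hΔ01 hcond
end

section
/- Let V and W = (W₁,…,W_d) be random variables such that the joint density of (V, W) on [l,u] × [0,1]^d with respect to Lebesgue measure is bounded below by m > 0 and above by M < ∞. Suppose h_j : [0,1] → ℝ are square-integrable with ∫₀¹ h_j(w) dw = 0 for each j, and H : [l,u] → ℝ is square-integrable. If E[(H(V) + Σ_{j=1}^d h_j(W_j))²] = 0, then H = 0 a.e. and each h_j = 0 a.e. -/
/-!
Since the density of `(V, W)` is bounded above on the box `[l, u] × [0, 1]^d` and vanishes off it,
`F(v, w) = H v + ∑ j, h j (w j)` is square integrable for the law of `(V, W)`, so `F(V, W) = 0`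
almost surely; the lower bound `m > 0` turns this into `F = 0` Lebesgue-a.e. on the box, which
carries the product measure `[l, u] ⊗ [0, 1]^d`. Integrating out `w` and using `∫ h j = 0` gives
`H = 0`, hence `∑ j, h j (w j) = 0` a.e. on the cube. The coordinates are independent under the
uniform measure there, so the variances of the `h j (w j)` add up to that of the sum, namely `0`;
a mean-zero variable of variance `0` vanishes.
-/

open MeasureTheory Set ProbabilityTheory

theorem variance_eq_zero_of_sum_ae_eq_zero {Ω ι : Type*} [MeasurableSpace Ω] {μ : Measure Ω}
    [Fintype ι] {X : ι → Ω → ℝ} (hX : ∀ i, MemLp (X i) 2 μ)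
    (hindep : Pairwise fun i j => X i ⟂ᵢ[μ] X j) (hsum : ∑ i, X i =ᵐ[μ] 0) (i : ι) :
    Var[X i; μ] = 0 := by
  have htotal : ∑ j, Var[X j; μ] = 0 := by
    rw [← IndepFun.variance_sum (fun j _ => hX j) (fun j _ k _ hjk => hindep hjk),
      variance_congr hsum, variance_zero]
  exact (Finset.sum_eq_zero_iff_of_nonneg fun j _ => variance_nonneg _ _).mp htotal i
    (Finset.mem_univ i)

theorem ae_eq_zero_of_sum_comp_eval_ae_eq_zero {ι : Type*} [Fintype ι] {Ω : ι → Type*}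
    [∀ i, MeasurableSpace (Ω i)] {μ : ∀ i, Measure (Ω i)} [∀ i, IsProbabilityMeasure (μ i)]
    {f : ∀ i, Ω i → ℝ} (hf : ∀ i, MemLp (f i) 2 (μ i)) (hmean : ∀ i, ∫ x, f i x ∂μ i = 0)
    (hsum : ∀ᵐ x ∂Measure.pi μ, ∑ i, f i (x i) = 0) (i : ι) : f i =ᵐ[μ i] 0 := by
  have hvar : Var[f i; μ i] = 0 := by
    rw [← (measurePreserving_eval μ i).variance_fun_comp (hf i).aemeasurable]
    refine variance_eq_zero_of_sum_ae_eq_zero (X := fun j (x : ∀ i, Ω i) => f j (x j))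
      (fun j => (hf j).comp_measurePreserving (measurePreserving_eval μ j))
      (fun j k hjk => (iIndepFun_pi fun j => (hf j).aemeasurable).indepFun hjk) ?_ i
    filter_upwards [hsum] with x hx
    simpa [Finset.sum_apply] using hx
  filter_upwards [ae_eq_integral_of_variance_eq_zero (hf i) hvar] with x hx
  rw [hx, hmean i, Pi.zero_apply]

section Prod

variable {α β : Type*} [MeasurableSpace α] [MeasurableSpace β] {μ : Measure α} {ν : Measure β}
  {f : α → ℝ} {g : β → ℝ}

theorem ae_eq_zero_left_of_add_ae_eq_zero_prod [IsProbabilityMeasure ν] (hg : Integrable g ν)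
    (hmean : ∫ y, g y ∂ν = 0) (h : ∀ᵐ z ∂μ.prod ν, f z.1 + g z.2 = 0) : f =ᵐ[μ] 0 := by
  filter_upwards [Measure.ae_ae_of_ae_prod h] with x hx
  have := integral_eq_zero_of_ae hx
  rwa [integral_add (integrable_const _) hg, integral_const, hmean, probReal_univ, one_smul,
    add_zero] at this

theorem ae_eq_zero_right_of_add_ae_eq_zero_prod [SFinite ν] (hμ : μ ≠ 0) (hf : f =ᵐ[μ] 0)
    (h : ∀ᵐ z ∂μ.prod ν, f z.1 + g z.2 = 0) : g =ᵐ[ν] 0 := by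
  have : (ae μ).NeBot := ae_neBot.2 hμ
  obtain ⟨x, hx, hfx⟩ := ((Measure.ae_ae_of_ae_prod h).and hf).exists
  filter_upwards [hx] with y hy
  simpa [hfx] using hy

end Prod

section Density

variable {α : Type*} [MeasurableSpace α] {μ : Measure α} {ρ : α → ℝ} {s : Set α} {c : ℝ}

theorem smul_restrict_le_withDensity_ofReal (hs : MeasurableSet s) (hρ : ∀ x ∈ s, c ≤ ρ x) :
    ENNReal.ofReal c • μ.restrict s ≤ μ.withDensity fun x => ENNReal.ofReal (ρ x) := by
  rw [← withDensity_const, ← withDensity_indicator hs]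
  refine withDensity_mono (Filter.Eventually.of_forall fun x => ?_)
  by_cases hx : x ∈ s
  · simpa [indicator_of_mem hx] using ENNReal.ofReal_le_ofReal (hρ x hx)
  · simp [indicator_of_notMem hx]

theorem withDensity_ofReal_le_smul_restrict (hs : MeasurableSet s) (hρ : ∀ x ∈ s, ρ x ≤ c)
    (hρ0 : ∀ x ∉ s, ρ x = 0) :
    μ.withDensity (fun x => ENNReal.ofReal (ρ x)) ≤ ENNReal.ofReal c • μ.restrict s := by
  rw [← withDensity_const, ← withDensity_indicator hs]
  refine withDensity_mono (Filter.Eventually.of_forall fun x => ?_)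
  by_cases hx : x ∈ s
  · simpa [indicator_of_mem hx] using ENNReal.ofReal_le_ofReal (hρ x hx)
  · simp [indicator_of_notMem hx, hρ0 x hx]

end Density

theorem ae_restrict_eq_zero_of_integral_sq_comp_eq_zero {Ω α : Type*} [MeasurableSpace Ω]
    [MeasurableSpace α] {μ : Measure Ω} {ν : Measure α} {T : Ω → α} (hT : AEMeasurable T μ)
    {ρ : α → ℝ} {s : Set α} (hs : MeasurableSet s) {m M : ℝ} (hm : 0 < m)
    (hρ : ∀ x ∈ s, m ≤ ρ x ∧ ρ x ≤ M) (hρ0 : ∀ x ∉ s, ρ x = 0)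
    (hlaw : μ.map T = ν.withDensity fun x => ENNReal.ofReal (ρ x)) {F : α → ℝ}
    (hF : MemLp F 2 (ν.restrict s)) (h : ∫ ω, F (T ω) ^ 2 ∂μ = 0) :
    ∀ᵐ x ∂ν.restrict s, F x = 0 := by
  -- The upper bound makes `F (T ·) ^ 2` integrable, so `h` is not a junk value.
  have hF2 : Integrable (fun x => F x ^ 2) (μ.map T) :=
    (hF.integrable_sq.smul_measure ENNReal.ofReal_ne_top).mono_measure
      (hlaw ▸ withDensity_ofReal_le_smul_restrict hs (fun x hx => (hρ x hx).2) hρ0)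
  have hFlaw : ∀ᵐ x ∂μ.map T, F x = 0 := by
    rw [← integral_map hT hF2.aestronglyMeasurable,
      integral_eq_zero_iff_of_nonneg (fun x => sq_nonneg _) hF2] at h
    filter_upwards [h] with x hx
    exact pow_eq_zero_iff two_ne_zero |>.mp hx
  rw [← Measure.ae_ennreal_smul_measure_iff (ENNReal.ofReal_pos.2 hm).ne']
  exact (Measure.absolutelyContinuous_of_le (hlaw ▸ smul_restrict_le_withDensity_ofReal hs
    fun x hx => (hρ x hx).1)).ae_le hFlaw

theorem additive_components_identifiability_general
    {Ω : Type*} [m0 : MeasurableSpace Ω] (μ : Measure Ω) [IsProbabilityMeasure μ]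
    (d : ℕ) (l u : ℝ) (hlu : l < u) (m M : ℝ) (hm : 0 < m)
    (V : Ω → ℝ) (hV : Measurable V) (W : Ω → Fin d → ℝ) (hW : Measurable W)
    (ρ : ℝ × (Fin d → ℝ) → ℝ)
    (hlaw : μ.map (fun ω => (V ω, W ω)) =
      (volume : Measure (ℝ × (Fin d → ℝ))).withDensity
        (fun p => ENNReal.ofReal (ρ p)))
    (hρbound : ∀ p ∈ (Icc l u) ×ˢ (univ.pi fun _ : Fin d => Icc (0:ℝ) 1),
      m ≤ ρ p ∧ ρ p ≤ M)
    (hρzero : ∀ p ∉ (Icc l u) ×ˢ (univ.pi fun _ : Fin d => Icc (0:ℝ) 1), ρ p = 0)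
    (h : Fin d → ℝ → ℝ)
    (hhL2 : ∀ j, MemLp (h j) 2 (volume.restrict (Icc (0:ℝ) 1)))
    (hhmean : ∀ j, (∫ w in Icc (0:ℝ) 1, h j w) = 0)
    (H : ℝ → ℝ)
    (hHL2 : MemLp H 2 (volume.restrict (Icc l u)))
    (hzero : (∫ ω, (H (V ω) + ∑ j, h j (W ω j)) ^ 2 ∂μ) = 0) :
    (∀ᵐ v ∂(volume.restrict (Icc l u)), H v = 0) ∧
    ∀ j, ∀ᵐ w ∂(volume.restrict (Icc (0:ℝ) 1)), h j w = 0 := by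
  have : IsProbabilityMeasure (volume.restrict (Icc (0:ℝ) 1)) := ⟨by simp⟩
  have hbox : volume.restrict (Icc l u ×ˢ univ.pi fun _ : Fin d => Icc (0:ℝ) 1) =
      (volume.restrict (Icc l u)).prod (Measure.pi fun _ => volume.restrict (Icc (0:ℝ) 1)) := by
    rw [Measure.volume_eq_prod, ← Measure.prod_restrict, volume_pi, Measure.restrict_pi_pi]
  have hcomp : ∀ j, Integrable (fun w : Fin d → ℝ => h j (w j))
      (Measure.pi fun _ => volume.restrict (Icc (0:ℝ) 1)) :=
    fun j => integrable_comp_eval ((hhL2 j).integrable one_le_two)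
  have hF := ae_restrict_eq_zero_of_integral_sq_comp_eq_zero (hV.prodMk hW).aemeasurable
    (measurableSet_Icc.prod (.univ_pi fun _ => measurableSet_Icc)) hm hρbound hρzero hlaw
    (F := fun p => H p.1 + ∑ j, h j (p.2 j))
    (hbox ▸ (hHL2.comp_fst _).add (memLp_finsetSum _ fun j _ =>
      MemLp.comp_snd (f := fun w : Fin d → ℝ => h j (w j))
        ((hhL2 j).comp_measurePreserving (measurePreserving_eval _ j)) _)) hzero
  rw [hbox] at hF
  have hH := ae_eq_zero_left_of_add_ae_eq_zero_prod (integrable_finsetSum _ fun j _ => hcomp j)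
    (by rw [integral_finsetSum _ fun j _ => hcomp j]
        exact Finset.sum_eq_zero fun j _ => (integral_comp_eval (hhL2 j).1).trans (hhmean j))
    hF
  exact ⟨hH, ae_eq_zero_of_sum_comp_eval_ae_eq_zero hhL2 hhmean
    (ae_eq_zero_right_of_add_ae_eq_zero_prod (by simp [hlu]) hH hF)⟩

theorem additive_components_identifiability
    {Ω : Type*} [m0 : MeasurableSpace Ω] (μ : Measure Ω) [IsProbabilityMeasure μ]
    (d : ℕ) (l u : ℝ) (hlu : l < u) (m M : ℝ) (hm : 0 < m) (hM : m ≤ M)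
    (V : Ω → ℝ) (hV : Measurable V) (W : Ω → Fin d → ℝ) (hW : Measurable W)
    (ρ : ℝ × (Fin d → ℝ) → ℝ) (hρm : Measurable ρ)
    (hlaw : μ.map (fun ω => (V ω, W ω)) =
      (volume : Measure (ℝ × (Fin d → ℝ))).withDensity
        (fun p => ENNReal.ofReal (ρ p)))
    (hρbound : ∀ p ∈ (Icc l u) ×ˢ (univ.pi fun _ : Fin d => Icc (0:ℝ) 1),
      m ≤ ρ p ∧ ρ p ≤ M)
    (hρzero : ∀ p ∉ (Icc l u) ×ˢ (univ.pi fun _ : Fin d => Icc (0:ℝ) 1), ρ p = 0)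
    (h : Fin d → ℝ → ℝ) (hhm : ∀ j, Measurable (h j))
    (hhL2 : ∀ j, MemLp (h j) 2 (volume.restrict (Icc (0:ℝ) 1)))
    (hhmean : ∀ j, (∫ w in Icc (0:ℝ) 1, h j w) = 0)
    (H : ℝ → ℝ) (hHm : Measurable H)
    (hHL2 : MemLp H 2 (volume.restrict (Icc l u)))
    (hzero : (∫ ω, (H (V ω) + ∑ j, h j (W ω j)) ^ 2 ∂μ) = 0) :
    (∀ᵐ v ∂(volume.restrict (Icc l u)), H v = 0) ∧
    ∀ j, ∀ᵐ w ∂(volume.restrict (Icc (0:ℝ) 1)), h j w = 0 :=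
  additive_components_identifiability_general (m0 := m0) μ d l u hlu m M hm V hV W hW ρ hlaw hρbound
    hρzero h hhL2 hhmean H hHL2 hzero
end

section
/- Let f : [a,b] → ℝ be continuously differentiable with ‖f‖_{L²(Leb)} ≤ δ and ‖f'‖_∞ ≤ L. Then ‖f‖_∞ ≤ max( (3L)^{1/3}·δ^{2/3}, 2δ/(b−a)^{1/2} )·C for a universal constant C; in particular, if ‖f_n‖_{L²} → 0 and sup_n ‖f_n'‖_∞ < ∞, then ‖f_n‖_∞ → 0. -/
/-!
Fix `x` and put `M = |f x|`. On any window of length `h` around `x` with `L * h ≤ M / 2`, the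
derivative bound keeps `|f| ≥ M / 2`, so `(M / 2) ^ 2 * h ≤ ∫ f ^ 2 ≤ δ ^ 2`. If the whole interval
is such a window this gives `M ≲ δ / (b - a) ^ (1/2)`; otherwise the window `h = M / (2 * L)` fits
and gives `M ^ 3 ≲ L * δ ^ 2`. The bound is continuous in `δ` and vanishes at `δ = 0`, which yields
the statement about sequences.
-/

open Set intervalIntegral Filter Topology

noncomputable def interpolationBound (L δ ℓ : ℝ) : ℝ :=
  max ((3 * L) ^ ((1 : ℝ) / 3) * δ ^ ((2 : ℝ) / 3)) (2 * δ / ℓ ^ ((1 : ℝ) / 2))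

lemma continuous_interpolationBound (L ℓ : ℝ) : Continuous fun δ => interpolationBound L δ ℓ := by
  unfold interpolationBound
  have : Continuous fun δ : ℝ => δ ^ ((2 : ℝ) / 3) := Real.continuous_rpow_const (by norm_num)
  fun_prop

lemma interpolationBound_zero (L ℓ : ℝ) : interpolationBound L 0 ℓ = 0 := by
  simp [interpolationBound]

lemma le_div_rpow_half_of_sq_half_mul_le {M δ ℓ : ℝ} (hM : 0 ≤ M) (hδ : 0 ≤ δ) (hℓ : 0 < ℓ)
    (h : (M / 2) ^ 2 * ℓ ≤ δ ^ 2) : M ≤ 2 * δ / ℓ ^ ((1 : ℝ) / 2) := by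
  rw [← Real.sqrt_eq_rpow, le_div_iff₀ (Real.sqrt_pos.2 hℓ), ← Real.sqrt_sq hM,
    ← Real.sqrt_mul (sq_nonneg M)]
  exact Real.sqrt_le_iff.2 ⟨by positivity, by nlinarith⟩

lemma le_two_mul_rpow_of_pow_three_le {M L δ : ℝ} (hL : 0 ≤ L) (hδ : 0 ≤ δ)
    (h : M ^ 3 ≤ 8 * L * δ ^ 2) : M ≤ 2 * ((3 * L) ^ ((1 : ℝ) / 3) * δ ^ ((2 : ℝ) / 3)) := by
  have hcube : ∀ {y : ℝ} (p : ℝ), 0 ≤ y → (y ^ (p / 3)) ^ 3 = y ^ p := fun p hy => by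
    rw [← Real.rpow_natCast, ← Real.rpow_mul hy]; norm_num
  refine le_of_pow_le_pow_left₀ three_ne_zero (by positivity) ?_
  rw [mul_pow, mul_pow, hcube 1 (by positivity), hcube 2 hδ, Real.rpow_one]
  norm_num
  nlinarith [mul_nonneg hL (sq_nonneg δ)]

lemma le_two_mul_interpolationBound {M L δ ℓ : ℝ} (hM : 0 ≤ M) (hL : 0 ≤ L) (hδ : 0 ≤ δ)
    (hℓ : 0 < ℓ) (hmass : ∀ h, 0 < h → h ≤ ℓ → L * h ≤ M / 2 → (M / 2) ^ 2 * h ≤ δ ^ 2) :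
    M ≤ 2 * interpolationBound L δ ℓ := by
  have hB : 0 ≤ interpolationBound L δ ℓ := le_max_of_le_left (by positivity)
  rcases hM.eq_or_lt with rfl | hMpos
  · positivity
  by_cases hwhole : L * ℓ ≤ M / 2
  · exact (le_div_rpow_half_of_sq_half_mul_le hM hδ hℓ (hmass ℓ hℓ le_rfl hwhole)).trans
      ((le_max_right _ _).trans (le_mul_of_one_le_left hB one_le_two))
  · rw [not_le] at hwhole
    have hLpos : 0 < L := by nlinarith
    have hwindow := hmass (M / (2 * L)) (by positivity)
      ((div_le_iff₀ (by positivity)).2 (by linarith)) (by field_simp; rfl)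
    have hcube : M ^ 3 ≤ 8 * L * δ ^ 2 := by
      rw [show (M / 2) ^ 2 * (M / (2 * L)) = M ^ 3 / (8 * L) by field_simp; ring,
        div_le_iff₀ (by positivity)] at hwindow
      linarith
    exact (le_two_mul_rpow_of_pow_three_le hL hδ hcube).trans
      (mul_le_mul_of_nonneg_left (le_max_left _ _) zero_le_two)

lemma exists_mem_Icc_add_of_le_sub {a b x h : ℝ} (hx : x ∈ Icc a b) (hh : 0 ≤ h)
    (hhab : h ≤ b - a) : ∃ u, a ≤ u ∧ u + h ≤ b ∧ x ∈ Icc u (u + h) :=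
  ⟨min x (b - h), le_min hx.1 (by linarith), by linarith [min_le_right x (b - h)],
    min_le_left _ _, by rw [← sub_le_iff_le_add]; exact le_min (by linarith) (by linarith [hx.2])⟩

lemma sq_mul_le_integral_sq_of_le_abs {f : ℝ → ℝ} {a b u v c : ℝ} (hau : a ≤ u) (huv : u ≤ v)
    (hvb : v ≤ b) (hf : ContinuousOn f (Icc a b)) (hc : 0 ≤ c) (hcf : ∀ t ∈ Icc u v, c ≤ |f t|) :
    c ^ 2 * (v - u) ≤ ∫ t in a..b, f t ^ 2 := by
  have hint : IntervalIntegrable (fun t => f t ^ 2) MeasureTheory.volume a b :=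
    (hf.pow 2).intervalIntegrable_of_Icc (hau.trans (huv.trans hvb))
  calc c ^ 2 * (v - u) = ∫ _ in u..v, c ^ 2 := by simp [mul_comm]
    _ ≤ ∫ t in u..v, f t ^ 2 :=
        integral_mono_on huv intervalIntegrable_const
          (hint.mono_set (by
            rw [uIcc_of_le huv, uIcc_of_le (hau.trans (huv.trans hvb))]
            exact Icc_subset_Icc hau hvb))
          fun t ht => by simpa only [sq_abs] using pow_le_pow_left₀ hc (hcf t ht) 2
    _ ≤ ∫ t in a..b, f t ^ 2 :=
        integral_mono_interval hau huv hvb (Eventually.of_forall fun t => sq_nonneg _) hint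

lemma sq_half_abs_mul_le_integral_sq {f : ℝ → ℝ} {a b u v x L : ℝ} (hau : a ≤ u) (hvb : v ≤ b)
    (hf : ∀ t ∈ Icc a b, DifferentiableAt ℝ f t) (hd : ∀ t ∈ Icc a b, |deriv f t| ≤ L)
    (hx : x ∈ Icc u v) (hLuv : L * (v - u) ≤ |f x| / 2) :
    (|f x| / 2) ^ 2 * (v - u) ≤ ∫ t in a..b, f t ^ 2 := by
  have hsub : Icc u v ⊆ Icc a b := Icc_subset_Icc hau hvb
  refine sq_mul_le_integral_sq_of_le_abs hau (hx.1.trans hx.2) hvb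
    (fun t ht => (hf t ht).continuousAt.continuousWithinAt) (by positivity) fun t ht => ?_
  have hlip : |f t - f x| ≤ L * |t - x| :=
    (convex_Icc a b).norm_image_sub_le_of_norm_deriv_le hf hd (hsub hx) (hsub ht)
  have hL : 0 ≤ L := (abs_nonneg _).trans (hd x (hsub hx))
  have htx : |t - x| ≤ v - u :=
    abs_sub_le_iff.2 ⟨by linarith [ht.2, hx.1], by linarith [ht.1, hx.2]⟩
  have hrev : |f x| - |f t| ≤ |f t - f x| := abs_sub_comm (f t) (f x) ▸ abs_sub_abs_le_abs_sub _ _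
  nlinarith [mul_le_mul_of_nonneg_left htx hL]

theorem abs_le_two_mul_interpolationBound {f : ℝ → ℝ} {a b δ L x : ℝ} (hab : a < b)
    (hf : ∀ t ∈ Icc a b, DifferentiableAt ℝ f t) (hδ : 0 ≤ δ) (hL : 0 ≤ L)
    (hd : ∀ t ∈ Icc a b, |deriv f t| ≤ L) (hint : ∫ t in a..b, f t ^ 2 ≤ δ ^ 2)
    (hx : x ∈ Icc a b) : |f x| ≤ 2 * interpolationBound L δ (b - a) := by
  refine le_two_mul_interpolationBound (abs_nonneg _) hL hδ (sub_pos.2 hab) fun h hh hhℓ hLh => ?_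
  obtain ⟨u, hau, hub, hxu⟩ := exists_mem_Icc_add_of_le_sub hx hh.le hhℓ
  have := sq_half_abs_mul_le_integral_sq hau hub hf hd hxu (by rwa [add_sub_cancel_left])
  rw [add_sub_cancel_left] at this
  exact this.trans hint

theorem exists_forall_abs_le_of_tendsto_integral_sq {fs : ℕ → ℝ → ℝ} {a b L ε : ℝ} (hab : a < b)
    (hf : ∀ n, ∀ t ∈ Icc a b, DifferentiableAt ℝ (fs n) t)
    (hd : ∀ n, ∀ t ∈ Icc a b, |deriv (fs n) t| ≤ L)
    (hlim : Tendsto (fun n => ∫ t in a..b, fs n t ^ 2) atTop (𝓝 0)) (hε : 0 < ε) :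
    ∃ N, ∀ n ≥ N, ∀ x ∈ Icc a b, |fs n x| ≤ ε := by
  have hL : 0 ≤ L := (abs_nonneg _).trans (hd 0 a (left_mem_Icc.2 hab.le))
  have hbound : Tendsto (fun n => 2 * interpolationBound L √(∫ t in a..b, fs n t ^ 2) (b - a))
      atTop (𝓝 0) := by
    have := ((continuous_interpolationBound L (b - a)).tendsto 0).comp (by simpa using hlim.sqrt)
    simpa [interpolationBound_zero] using this.const_mul 2
  obtain ⟨N, hN⟩ := eventually_atTop.1 (hbound.eventually (ge_mem_nhds hε))
  refine ⟨N, fun n hn x hx => le_trans ?_ (hN n hn)⟩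
  exact abs_le_two_mul_interpolationBound hab (hf n) (Real.sqrt_nonneg _) hL (hd n)
    (Real.sq_sqrt (integral_nonneg hab.le fun t _ => sq_nonneg _)).ge hx

theorem sup_norm_interpolation :
    ∃ C : ℝ, 0 < C ∧
      (∀ (a b : ℝ), a < b → ∀ (f : ℝ → ℝ), Differentiable ℝ f →
        ∀ (δ L : ℝ), 0 ≤ δ → 0 ≤ L →
        (∀ x ∈ Icc a b, |deriv f x| ≤ L) →
        (∫ x in a..b, (f x) ^ 2) ≤ δ ^ 2 →
        ∀ x ∈ Icc a b,
          |f x| ≤ C * max ((3 * L) ^ ((1:ℝ)/3) * δ ^ ((2:ℝ)/3))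
            (2 * δ / (b - a) ^ ((1:ℝ)/2))) ∧
      (∀ (a b : ℝ), a < b → ∀ (fseq : ℕ → ℝ → ℝ), (∀ n, Differentiable ℝ (fseq n)) →
        ∀ L' : ℝ, (∀ n, ∀ x ∈ Icc a b, |deriv (fseq n) x| ≤ L') →
        Filter.Tendsto (fun n => ∫ x in a..b, (fseq n x) ^ 2)
          Filter.atTop (nhds 0) →
        ∀ ε : ℝ, 0 < ε → ∃ N : ℕ, ∀ n ≥ N, ∀ x ∈ Icc a b, |fseq n x| ≤ ε) :=
  ⟨2, two_pos,
    fun _ _ hab _ hf _ _ hδ hL hd hint _ hx =>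
      abs_le_two_mul_interpolationBound hab (fun t _ => hf t) hδ hL hd hint hx,
    fun _ _ hab _ hf _ hd hlim _ hε =>
      exists_forall_abs_le_of_tendsto_integral_sq hab (fun n t _ => hf n t) hd hlim hε⟩
end
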